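/- Let P be a finite projective plane of order N ≥ 3 and let O be a rigid oval of P, i.e., an oval such that every automorphism of P mapping O onto itself fixes every point of O. Then every automorphism of P mapping O onto itself is the identity automorphism. -/

import Mathlib

/-!
An automorphism fixing the oval pointwise fixes every secant, since a secant joins two fixed points.
It also fixes every tangent: in a plane of order `N` the `N` secants through a point of the oval
leave room for exactly one tangent there, and the automorphism maps tangents at a fixed point of
the oval to tangents at that point. So every line meeting the oval is fixed. A point off the oval
lies on two distinct lines through points of the oval (three oval points are never collinear), so
it is fixed too, and then every line, joining two fixed points, is fixed.
-/

/-- A point-line incidence relation `I` is a projective plane if any two distinct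
points lie on a unique common line, any two distinct lines meet in a unique point,
and there exist four points no three of which are incident with a common line. -/
structure IsProjectivePlane {P L : Type*} (I : P → L → Prop) : Prop where
  line_unique : ∀ p q : P, p ≠ q → ∃! M : L, I p M ∧ I q M
  point_unique : ∀ M N : L, M ≠ N → ∃! p : P, I p M ∧ I p N
  nondeg : ∃ a b c d : P, a ≠ b ∧ a ≠ c ∧ a ≠ d ∧ b ≠ c ∧ b ≠ d ∧ c ≠ d ∧
    ∀ M : L, ¬(I a M ∧ I b M ∧ I c M) ∧ ¬(I a M ∧ I b M ∧ I d M) ∧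
      ¬(I a M ∧ I c M ∧ I d M) ∧ ¬(I b M ∧ I c M ∧ I d M)

section

variable {P L : Type*} {I : P → L → Prop}

namespace IsProjectivePlane

theorem line_eq (hI : IsProjectivePlane I) {p q : P} (hpq : p ≠ q) {M M' : L}
    (hpM : I p M) (hqM : I q M) (hpM' : I p M') (hqM' : I q M') : M = M' :=
  (hI.line_unique p q hpq).unique ⟨hpM, hqM⟩ ⟨hpM', hqM'⟩

theorem point_eq (hI : IsProjectivePlane I) {M M' : L} (hMM' : M ≠ M') {p q : P}
    (hpM : I p M) (hpM' : I p M') (hqM : I q M) (hqM' : I q M') : p = q :=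
  (hI.point_unique M M' hMM').unique ⟨hpM, hpM'⟩ ⟨hqM, hqM'⟩

end IsProjectivePlane

def IsArc (I : P → L → Prop) (O : Set P) : Prop :=
  ∀ p ∈ O, ∀ q ∈ O, ∀ r ∈ O, p ≠ q → p ≠ r → q ≠ r → ∀ M : L, ¬(I p M ∧ I q M ∧ I r M)

def IsTangentAt (I : P → L → Prop) (O : Set P) (p : P) (M : L) : Prop :=
  I p M ∧ ∀ q ∈ O, I q M → q = p

def IsAutomorphism (I : P → L → Prop) (σ : Equiv.Perm P) (τ : Equiv.Perm L) : Prop :=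
  ∀ p M, I p M ↔ I (σ p) (τ M)

theorem IsArc.isTangentAt_unique (hI : IsProjectivePlane I) {O : Set P} (hO : IsArc I O)
    {N : ℕ} (hOcard : Nat.card O = N + 1) {p : P} (hpcard : Nat.card {M : L // I p M} = N + 1)
    (hp : p ∈ O) {M₀ M₁ : L} (h₀ : IsTangentAt I O p M₀) (h₁ : IsTangentAt I O p M₁) :
    M₀ = M₁ := by
  have : Finite {M : L // I p M} := Nat.finite_of_card_ne_zero (by omega)
  -- Sending `p` to `M₀` and every other point of `O` to its secant through `p` injects `O` into
  -- the `N + 1` lines through `p`; so `M₁` is hit, and only `p` can be sent to a tangent.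
  have hjoin : ∀ q : O, ∃ M : L, I p M ∧ I q M ∧ ((q : P) = p → M = M₀) := by
    rintro ⟨q, hq⟩
    by_cases hqp : q = p
    · exact ⟨M₀, h₀.1, hqp ▸ h₀.1, fun _ => rfl⟩
    · obtain ⟨M, ⟨hpM, hqM⟩, -⟩ := hI.line_unique p q (Ne.symm hqp)
      exact ⟨M, hpM, hqM, fun h => absurd h hqp⟩
  choose f hfp hfq hfM₀ using hjoin
  have hinj : Function.Injective fun q : O => (⟨f q, hfp q⟩ : {M : L // I p M}) := by
    intro q q' hqq'
    have hf : f q = f q' := congrArg Subtype.val hqq'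
    by_contra hne
    by_cases hq : (q : P) = p
    · exact hne (Subtype.ext (hq.trans (h₀.2 q' q'.2 (hfM₀ q hq ▸ hf ▸ hfq q')).symm))
    by_cases hq' : (q' : P) = p
    · exact hne (Subtype.ext ((h₀.2 q q.2 (hfM₀ q' hq' ▸ hf.symm ▸ hfq q)).trans hq'.symm))
    exact hO p hp q q.2 q' q'.2 (Ne.symm hq) (Ne.symm hq') (fun h => hne (Subtype.ext h)) (f q)
      ⟨hfp q, hfq q, hf ▸ hfq q'⟩
  obtain ⟨q, hq⟩ := ((Nat.bijective_iff_injective_and_card _).2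
    ⟨hinj, hOcard.trans hpcard.symm⟩).2 ⟨M₁, h₁.1⟩
  have hfq₁ : f q = M₁ := congrArg Subtype.val hq
  have hqp : (q : P) = p := h₁.2 q q.2 (hfq₁ ▸ hfq q)
  exact (hfM₀ q hqp).symm.trans hfq₁

namespace IsAutomorphism

variable {σ : Equiv.Perm P} {τ : Equiv.Perm L}

theorem map_line_eq_self (hI : IsProjectivePlane I) (hστ : IsAutomorphism I σ τ) {p q : P}
    (hpq : p ≠ q) {M : L} (hpM : I p M) (hqM : I q M) (hp : σ p = p) (hq : σ q = q) :
    τ M = M :=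
  hI.line_eq hpq (hp ▸ (hστ p M).1 hpM) (hq ▸ (hστ q M).1 hqM) hpM hqM

theorem map_point_eq_self (hI : IsProjectivePlane I) (hστ : IsAutomorphism I σ τ) {M M' : L}
    (hMM' : M ≠ M') {x : P} (hxM : I x M) (hxM' : I x M') (hM : τ M = M) (hM' : τ M' = M') :
    σ x = x :=
  hI.point_eq hMM' (hM ▸ (hστ x M).1 hxM) (hM' ▸ (hστ x M').1 hxM') hxM hxM'

theorem isTangentAt_map (hστ : IsAutomorphism I σ τ) {O : Set P} (hfix : ∀ q ∈ O, σ q = q)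
    {p : P} (hp : p ∈ O) {M : L} (hM : IsTangentAt I O p M) : IsTangentAt I O p (τ M) :=
  ⟨hfix p hp ▸ (hστ p M).1 hM.1,
    fun q hq hqM => hM.2 q hq ((hστ q M).2 ((hfix q hq).symm ▸ hqM))⟩

theorem map_line_eq_self_of_meets (hI : IsProjectivePlane I) (hστ : IsAutomorphism I σ τ)
    {O : Set P} (hO : IsArc I O) {N : ℕ} (hOcard : Nat.card O = N + 1) {p : P}
    (hpcard : Nat.card {M : L // I p M} = N + 1) (hfix : ∀ q ∈ O, σ q = q) (hp : p ∈ O)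
    {M : L} (hpM : I p M) : τ M = M := by
  by_cases hsecant : ∃ q ∈ O, q ≠ p ∧ I q M
  · obtain ⟨q, hq, hqp, hqM⟩ := hsecant
    exact hστ.map_line_eq_self hI (Ne.symm hqp) hpM hqM (hfix p hp) (hfix q hq)
  · push Not at hsecant
    have htangent : IsTangentAt I O p M :=
      ⟨hpM, fun q hq hqM => by_contra fun hqp => hsecant q hq hqp hqM⟩
    exact hO.isTangentAt_unique hI hOcard hpcard hp (hστ.isTangentAt_map hfix hp htangent)
      htangent

theorem map_point_eq_self_of_arc (hI : IsProjectivePlane I) (hστ : IsAutomorphism I σ τ)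
    {O : Set P} (hO : IsArc I O) (hfix : ∀ q ∈ O, σ q = q)
    (hlines : ∀ M : L, ∀ p ∈ O, I p M → τ M = M) {a b c : P} (ha : a ∈ O) (hb : b ∈ O)
    (hc : c ∈ O) (hab : a ≠ b) (hac : a ≠ c) (hbc : b ≠ c) (x : P) : σ x = x := by
  by_cases hx : x ∈ O
  · exact hfix x hx
  obtain ⟨Ma, ⟨hxMa, haMa⟩, -⟩ := hI.line_unique x a (fun h => hx (h ▸ ha))
  obtain ⟨Mb, ⟨hxMb, hbMb⟩, -⟩ := hI.line_unique x b (fun h => hx (h ▸ hb))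
  obtain ⟨Mc, ⟨hxMc, hcMc⟩, -⟩ := hI.line_unique x c (fun h => hx (h ▸ hc))
  by_cases hMab : Ma = Mb
  · have hMac : Ma ≠ Mc := by
      rintro rfl
      exact hO a ha b hb c hc hab hac hbc Ma ⟨haMa, hMab ▸ hbMb, hcMc⟩
    exact hστ.map_point_eq_self hI hMac hxMa hxMc (hlines Ma a ha haMa) (hlines Mc c hc hcMc)
  · exact hστ.map_point_eq_self hI hMab hxMa hxMb (hlines Ma a ha haMa) (hlines Mb b hb hbMb)

end IsAutomorphism

end

theorem automorphism_stabilizing_rigid_oval_is_identity_general {P L : Type*}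
    (I : P → L → Prop) (hplane : IsProjectivePlane I)
    (N : ℕ) (hN : 3 ≤ N)
    (horder_lines : ∀ M : L, Nat.card {p : P // I p M} = N + 1)
    (horder_points : ∀ p : P, Nat.card {M : L // I p M} = N + 1)
    (O : Set P) (hOcard : Nat.card O = N + 1)
    (hOarc : ∀ p ∈ O, ∀ q ∈ O, ∀ r ∈ O, p ≠ q → p ≠ r → q ≠ r →
      ∀ M : L, ¬(I p M ∧ I q M ∧ I r M))
    (hrigid : ∀ (σ : Equiv.Perm P) (τ : Equiv.Perm L),
      (∀ p M, I p M ↔ I (σ p) (τ M)) → (σ : P → P) '' O = O → ∀ p ∈ O, σ p = p) :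
    ∀ (σ : Equiv.Perm P) (τ : Equiv.Perm L),
      (∀ p M, I p M ↔ I (σ p) (τ M)) → (σ : P → P) '' O = O →
      (∀ p : P, σ p = p) ∧ (∀ M : L, τ M = M) := by
  intro σ τ hστ hσO
  have hfix : ∀ p ∈ O, σ p = p := hrigid σ τ hστ hσO
  have hlines : ∀ M : L, ∀ p ∈ O, I p M → τ M = M := fun M p hp hpM =>
    IsAutomorphism.map_line_eq_self_of_meets hplane hστ hOarc hOcard (horder_points p) hfix hp
      hpM
  have hOncard : 2 < O.ncard := by rw [← Nat.card_coe_set_eq, hOcard]; omega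
  obtain ⟨a, b, c, ha, hb, hc, hab, hac, hbc⟩ :=
    (Set.two_lt_ncard_iff (Set.finite_of_ncard_pos (by omega))).1 hOncard
  have hpoints : ∀ x : P, σ x = x :=
    IsAutomorphism.map_point_eq_self_of_arc hplane hστ hOarc hfix hlines ha hb hc hab hac hbc
  refine ⟨hpoints, fun M => ?_⟩
  have hMcard := horder_lines M
  have : Finite {p : P // I p M} := Nat.finite_of_card_ne_zero (by omega)
  obtain ⟨⟨p, hp⟩, ⟨q, hq⟩, hpq⟩ :=
    Finite.one_lt_card_iff_nontrivial.1 (by omega : 1 < Nat.card {p : P // I p M})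
  exact IsAutomorphism.map_line_eq_self hplane hστ (fun h => hpq (Subtype.ext h)) hp hq
    (hpoints p) (hpoints q)

/-- Let `O` be a rigid oval of a finite projective plane of order `N ≥ 3`, i.e. an
oval such that every automorphism of the plane mapping `O` onto itself fixes every
point of `O`.  Then every automorphism of the plane mapping `O` onto itself is the
identity automorphism. -/
theorem automorphism_stabilizing_rigid_oval_is_identity {P L : Type*} [Finite P] [Finite L]
    (I : P → L → Prop) (hplane : IsProjectivePlane I)
    (N : ℕ) (hN : 3 ≤ N)
    (horder_lines : ∀ M : L, Nat.card {p : P // I p M} = N + 1)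
    (horder_points : ∀ p : P, Nat.card {M : L // I p M} = N + 1)
    (O : Set P) (hOcard : Nat.card O = N + 1)
    (hOarc : ∀ p ∈ O, ∀ q ∈ O, ∀ r ∈ O, p ≠ q → p ≠ r → q ≠ r →
      ∀ M : L, ¬(I p M ∧ I q M ∧ I r M))
    (hrigid : ∀ (σ : Equiv.Perm P) (τ : Equiv.Perm L),
      (∀ p M, I p M ↔ I (σ p) (τ M)) → (σ : P → P) '' O = O → ∀ p ∈ O, σ p = p) :
    ∀ (σ : Equiv.Perm P) (τ : Equiv.Perm L),
      (∀ p M, I p M ↔ I (σ p) (τ M)) → (σ : P → P) '' O = O →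
      (∀ p : P, σ p = p) ∧ (∀ M : L, τ M = M) :=
  automorphism_stabilizing_rigid_oval_is_identity_general I hplane N hN horder_lines horder_points O
    hOcard hOarc hrigid
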